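/- If G is a finite group and every composition factor of G has an ordered generating system, then G has an ordered generating system. -/

import Mathlib

/-- `(a, m)` is an *ordered generating system* of the group `G` if every `m k` is positive
and every `g : G` has a unique representation `g = a 0 ^ i 0 * a 1 ^ i 1 * ⋯ * a (n-1) ^ i (n-1)`
with `0 ≤ i k < m k` for all `k`. -/
def IsOGS {G : Type*} [Group G] {n : ℕ} (a : Fin n → G) (m : Fin n → ℕ) : Prop :=
  (∀ k, 0 < m k) ∧
    ∀ g : G, ∃! i : (k : Fin n) → Fin (m k),
      g = (List.ofFn fun k => a k ^ ((i k : ℕ))).prod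

/-- A group `G` has an ordered generating system if some tuple of elements together with
some bounds forms one. -/
def HasOGS (G : Type*) [Group G] : Prop :=
  ∃ (n : ℕ) (a : Fin n → G) (m : Fin n → ℕ), IsOGS a m

/-!
A finite group has a composition series: take a maximal proper normal subgroup and recurse.
OGSs glue along extensions: if `N ⊴ G`, then lifts of an OGS of `G ⧸ N` followed by an OGS of
`N` form an OGS of `G`, because the products of the lifts form a transversal of `N`.
Climbing a composition series from `⊥` to `⊤` therefore produces an OGS of `G`.
-/

open Function

section

variable {G H : Type*} [Group G] [Group H]

def ogsProd {n : ℕ} (a : Fin n → G) (m : Fin n → ℕ) (i : (k : Fin n) → Fin (m k)) : G :=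
  (List.ofFn fun k => a k ^ (i k : ℕ)).prod

theorem isOGS_iff_bijective {n : ℕ} (a : Fin n → G) (m : Fin n → ℕ) :
    IsOGS a m ↔ (∀ k, 0 < m k) ∧ Bijective (ogsProd a m) := by
  rw [bijective_iff_existsUnique]
  exact and_congr_right fun _ => forall_congr' fun g => existsUnique_congr fun i => eq_comm

theorem map_ogsProd (f : G →* H) {n : ℕ} (a : Fin n → G) (m : Fin n → ℕ)
    (i : (k : Fin n) → Fin (m k)) : f (ogsProd a m i) = ogsProd (fun k => f (a k)) m i := by
  simp only [ogsProd, map_list_prod, List.map_ofFn, comp_def, map_pow]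

theorem HasOGS.of_mulEquiv (e : G ≃* H) (hG : HasOGS G) : HasOGS H := by
  obtain ⟨n, a, m, hOGS⟩ := hG
  obtain ⟨hpos, hbij⟩ := (isOGS_iff_bijective a m).1 hOGS
  refine ⟨n, fun k => e (a k), m, (isOGS_iff_bijective _ m).2 ⟨hpos, ?_⟩⟩
  convert e.bijective.comp hbij using 1
  exact funext fun i => (map_ogsProd e.toMonoidHom a m i).symm

theorem HasOGS.of_subsingleton [Subsingleton G] : HasOGS G :=
  ⟨0, Fin.elim0, Fin.elim0, Fin.rec0, fun _ =>
    ⟨Fin.rec0, Subsingleton.elim _ _, fun _ _ => funext Fin.rec0⟩⟩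

def Fin.piAppendEquiv {n₁ n₂ : ℕ} (m₁ : Fin n₁ → ℕ) (m₂ : Fin n₂ → ℕ) :
    ((k : Fin (n₁ + n₂)) → Fin (Fin.append m₁ m₂ k)) ≃
      ((j : Fin n₁) → Fin (m₁ j)) × ((j : Fin n₂) → Fin (m₂ j)) where
  toFun i :=
    (fun j => (i (Fin.castAdd n₂ j)).cast (Fin.append_left m₁ m₂ j),
     fun j => (i (Fin.natAdd n₁ j)).cast (Fin.append_right m₁ m₂ j))
  invFun p :=
    Fin.addCases (motive := fun k => Fin (Fin.append m₁ m₂ k))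
      (fun j => (p.1 j).cast (Fin.append_left m₁ m₂ j).symm)
      (fun j => (p.2 j).cast (Fin.append_right m₁ m₂ j).symm)
  left_inv i := by
    funext k
    refine Fin.addCases (fun j => ?_) (fun j => ?_) k
    · simp only [Fin.addCases_left, Fin.cast_cast, Fin.cast_eq_self]
    · simp only [Fin.addCases_right, Fin.cast_cast, Fin.cast_eq_self]
  right_inv p := by
    ext j <;> simp

theorem ogsProd_append {n₁ n₂ : ℕ} (a₁ : Fin n₁ → G) (a₂ : Fin n₂ → G) (m₁ : Fin n₁ → ℕ)
    (m₂ : Fin n₂ → ℕ) (p : ((j : Fin n₁) → Fin (m₁ j)) × ((j : Fin n₂) → Fin (m₂ j))) :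
    ogsProd (Fin.append a₁ a₂) (Fin.append m₁ m₂) ((Fin.piAppendEquiv m₁ m₂).symm p) =
      ogsProd a₁ m₁ p.1 * ogsProd a₂ m₂ p.2 := by
  have : (fun k => Fin.append a₁ a₂ k ^ ((Fin.piAppendEquiv m₁ m₂).symm p k : ℕ)) =
      Fin.append (fun j => a₁ j ^ (p.1 j : ℕ)) (fun j => a₂ j ^ (p.2 j : ℕ)) := by
    funext k
    refine Fin.addCases (fun j => ?_) (fun j => ?_) k <;> simp [Fin.piAppendEquiv]
  rw [ogsProd, this, List.ofFn_fin_append, List.prod_append, ogsProd, ogsProd]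

theorem bijective_mul_of_bijective_mk {I J : Type*} (N : Subgroup G) [N.Normal]
    {f : I → G} {g : J → N} (hf : Bijective fun i => (f i : G ⧸ N)) (hg : Bijective g) :
    Bijective fun p : I × J => f p.1 * g p.2 := by
  have mk_mul (p : I × J) : ((f p.1 * g p.2 : G) : G ⧸ N) = f p.1 := by
    rw [QuotientGroup.mk_mul, (QuotientGroup.eq_one_iff _).2 (g p.2).2, mul_one]
  refine ⟨fun p q hpq => ?_, fun x => ?_⟩
  · dsimp only at hpq
    have h₁ : p.1 = q.1 := hf.1 (by simpa only [mk_mul] using congrArg ((↑) : G → G ⧸ N) hpq)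
    rw [h₁, mul_right_inj] at hpq
    exact Prod.ext h₁ (hg.1 (Subtype.ext hpq))
  · obtain ⟨i, hi⟩ := hf.2 x
    obtain ⟨j, hj⟩ := hg.2 ⟨(f i)⁻¹ * x, QuotientGroup.eq.1 hi⟩
    exact ⟨(i, j), by simp [hj]⟩

theorem HasOGS.of_quotient (N : Subgroup G) [N.Normal] (hN : HasOGS N) (hQ : HasOGS (G ⧸ N)) :
    HasOGS G := by
  obtain ⟨n₁, b, m₁, hb⟩ := hQ
  obtain ⟨n₂, a, m₂, ha⟩ := hN
  rw [isOGS_iff_bijective] at hb ha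
  refine ⟨n₁ + n₂, Fin.append (fun j => (b j).out) (fun j => a j), Fin.append m₁ m₂,
    (isOGS_iff_bijective _ _).2 ⟨Fin.addCases (by simpa using hb.1) (by simpa using ha.1), ?_⟩⟩
  have hlift : Bijective fun i => ((ogsProd (fun j => (b j).out) m₁ i : G) : G ⧸ N) := by
    convert hb.2 using 2 with i
    rw [← QuotientGroup.mk'_apply, map_ogsProd]
    simp only [QuotientGroup.mk'_apply, QuotientGroup.out_eq']
  have := (bijective_mul_of_bijective_mk N hlift ha.2).comp (Fin.piAppendEquiv m₁ m₂).bijective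
  convert this using 1
  funext i
  conv_lhs => rw [← (Fin.piAppendEquiv m₁ m₂).symm_apply_apply i, ogsProd_append]
  exact congrArg _ (map_ogsProd N.subtype a m₂ _).symm

theorem HasOGS.of_series {n : ℕ} (S : Fin (n + 1) → Subgroup G)
    (h₀ : S 0 = ⊥) (hle : ∀ i : Fin n, S i.castSucc ≤ S i.succ)
    (hN : ∀ i : Fin n, ((S i.castSucc).subgroupOf (S i.succ)).Normal)
    (hfac : ∀ i : Fin n, letI := hN i;
      HasOGS (S i.succ ⧸ (S i.castSucc).subgroupOf (S i.succ)))
    (i : Fin (n + 1)) : HasOGS (S i) := by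
  induction i using Fin.induction with
  | zero => rw [h₀]; exact HasOGS.of_subsingleton
  | succ j ih =>
    have := hN j
    exact .of_quotient _ (ih.of_mulEquiv (Subgroup.subgroupOfEquivOfLe (hle j)).symm) (hfac j)

theorem QuotientGroup.isSimpleGroup_of_maximal (M : Subgroup G) [M.Normal]
    (hM : M ≠ ⊤) (hmax : ∀ K : Subgroup G, K.Normal → M ≤ K → K = M ∨ K = ⊤) :
    IsSimpleGroup (G ⧸ M) := by
  have : Nontrivial (G ⧸ M) := QuotientGroup.nontrivial_iff.2 hM
  refine ⟨fun H hH => ?_⟩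
  rw [← H.map_comap_eq_self_of_surjective (QuotientGroup.mk'_surjective M)]
  rcases hmax _ (hH.comap _) (QuotientGroup.le_comap_mk' M H) with hK | hK <;> rw [hK]
  · exact .inl (QuotientGroup.map_mk'_self M)
  · exact .inr (Subgroup.map_top_of_surjective _ (QuotientGroup.mk'_surjective M))

theorem exists_isSimpleGroup_quotient [Finite G] [Nontrivial G] :
    ∃ (M : Subgroup G) (_ : M.Normal), IsSimpleGroup (G ⧸ M) := by
  obtain ⟨M, ⟨hMn, hMtop⟩, hMmax⟩ := Set.Finite.exists_maximalFor id
    {K : Subgroup G | K.Normal ∧ K ≠ ⊤} (Set.toFinite _) ⟨⊥, inferInstance, bot_ne_top⟩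
  refine ⟨M, hMn, QuotientGroup.isSimpleGroup_of_maximal M hMtop fun K hK hMK => ?_⟩
  by_cases hKtop : K = ⊤
  · exact .inr hKtop
  · exact .inl (le_antisymm (hMmax ⟨hK, hKtop⟩ hMK) hMK)

theorem Subgroup.exists_compositionSeries [Finite G] (H : Subgroup G) :
    ∃ (n : ℕ) (S : Fin (n + 1) → Subgroup G), S 0 = ⊥ ∧ S (Fin.last n) = H ∧
      (∀ i : Fin n, S i.castSucc ≤ S i.succ) ∧
      ∀ i : Fin n, ∃ _ : ((S i.castSucc).subgroupOf (S i.succ)).Normal,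
        IsSimpleGroup (S i.succ ⧸ (S i.castSucc).subgroupOf (S i.succ)) := by
  induction H using WellFoundedLT.induction with
  | _ H ih =>
  rcases eq_or_ne H ⊥ with rfl | hH
  · exact ⟨0, fun _ => ⊥, rfl, rfl, Fin.elim0, Fin.elim0⟩
  have : Nontrivial H := (Subgroup.nontrivial_iff_ne_bot H).2 hH
  obtain ⟨M, hM, hsimple⟩ := exists_isSimpleGroup_quotient (G := H)
  have hMH : M.map H.subtype < H :=
    (Subgroup.map_subtype_lt_map_subtype.2 (lt_top_iff_ne_top.2
      (QuotientGroup.nontrivial_iff.1 hsimple.toNontrivial))).trans_le (Subgroup.map_subtype_le ⊤)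
  obtain ⟨n, S, h₀, hlast, hle, hfac⟩ := ih _ hMH
  let T : Fin (n + 1 + 1) → Subgroup G := Fin.snoc S H
  have T_castSucc_castSucc (j : Fin n) : T j.castSucc.castSucc = S j.castSucc :=
    Fin.snoc_castSucc ..
  have T_castSucc_succ (j : Fin n) : T j.castSucc.succ = S j.succ := by
    rw [Fin.succ_castSucc]
    exact Fin.snoc_castSucc ..
  have T_castSucc_last : T (Fin.last n).castSucc = M.map H.subtype :=
    (Fin.snoc_castSucc ..).trans hlast
  have T_succ_last : T (Fin.last n).succ = H := Fin.snoc_last ..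
  refine ⟨n + 1, T, (Fin.snoc_castSucc (i := 0) ..).trans h₀, Fin.snoc_last ..,
    Fin.lastCases ?_ fun j => ?_, Fin.lastCases ?_ fun j => ?_⟩
  · rw [T_castSucc_last, T_succ_last]
    exact hMH.le
  · rw [T_castSucc_castSucc, T_castSucc_succ]
    exact hle j
  · rw [T_castSucc_last, T_succ_last, ← Subgroup.comap_subtype,
      Subgroup.comap_map_eq_self_of_injective H.subtype_injective]
    exact ⟨hM, hsimple⟩
  · rw [T_castSucc_castSucc, T_castSucc_succ]
    exact hfac j

end

theorem hasOGS_of_composition_factors {G : Type*} [Group G] [Fintype G]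
    (h : ∀ (n : ℕ) (S : Fin (n + 1) → Subgroup G),
      S 0 = ⊥ → S (Fin.last n) = ⊤ →
      (∀ i : Fin n, S i.castSucc ≤ S i.succ) →
      ∀ hN : ∀ i : Fin n, ((S i.castSucc).subgroupOf (S i.succ)).Normal,
      (∀ i : Fin n, letI := hN i;
        IsSimpleGroup (S i.succ ⧸ (S i.castSucc).subgroupOf (S i.succ))) →
      ∀ i : Fin n, letI := hN i;
        HasOGS (S i.succ ⧸ (S i.castSucc).subgroupOf (S i.succ))) :
    HasOGS G := by
  obtain ⟨n, S, h₀, hlast, hle, hfac⟩ := (⊤ : Subgroup G).exists_compositionSeries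
  choose hN hsimple using hfac
  have htop := HasOGS.of_series S h₀ hle hN (h n S h₀ hlast hle hN hsimple) (Fin.last n)
  rw [hlast] at htop
  exact htop.of_mulEquiv Subgroup.topEquiv
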